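/- Any homogeneous polynomial f of degree d in n variables that is a nonnegative linear combination of Schur polynomials f = Σ_μ c_μ s_μ with c_{(d)} > 0 has support equal to the set of all nonnegative integer vectors with coordinate sum d; in particular, f is SNP. -/

import Mathlib

open Finset

/-- The number of cells of the tableau `T` whose entry equals `v`. -/
def contentCount {μ : YoungDiagram} (T : SemistandardYoungTableau μ) (v : ℕ) : ℕ :=
  (μ.cells.filter fun c => T c.1 c.2 = v).card

/-- The Kostka number `K_{lam,mu}`: the number of semistandard Young tableaux of shape
`lam` and content `mu` (entries `0`-based). -/
noncomputable def kostka (lam : YoungDiagram) (mu : ℕ → ℕ) : ℕ :=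
  Set.ncard {T : SemistandardYoungTableau lam | ∀ v : ℕ, contentCount T v = mu v}

/-- The Schur polynomial `s_lam(x_1, …, x_n)`, via its monomial expansion
`s_lam = ∑_α K_{lam,α} x^α` over all exponent vectors `α` of total degree `|lam|`. -/
noncomputable def schur (lam : YoungDiagram) (n : ℕ) : MvPolynomial (Fin n) ℝ :=
  ∑ α ∈ Finset.Nat.antidiagonalTuple n lam.card,
    (kostka lam (fun v => if h : v < n then α ⟨v, h⟩ else 0) : ℝ) •
      ∏ i, MvPolynomial.X i ^ α i

/-- The permutahedron `P_lam ⊆ ℝ^n`. -/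
noncomputable def permutahedron (n : ℕ) (lam : ℕ → ℕ) : Set (Fin n → ℝ) :=
  convexHull ℝ {v | ∃ σ : Equiv.Perm (Fin n), v = fun i => (lam (σ i : ℕ) : ℝ)}

/-- The Newton polytope of a polynomial: the convex hull of its exponent vectors. -/
noncomputable def newtonPolytope {n : ℕ} (f : MvPolynomial (Fin n) ℝ) : Set (Fin n → ℝ) :=
  convexHull ℝ {v | ∃ α ∈ f.support, v = fun i => ((α i : ℕ) : ℝ)}

/-- `f` has a saturated Newton polytope: the lattice points of `Newton(f)` are
exactly the exponent vectors in the support of `f`. -/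
def SNP {n : ℕ} (f : MvPolynomial (Fin n) ℝ) : Prop :=
  ∀ α : Fin n → ℕ,
    ((fun i => (α i : ℝ)) ∈ newtonPolytope f ↔ ∃ β ∈ f.support, ∀ i, β i = α i)

/-- The one-row Young diagram `(d)`. -/
def oneRow (d : ℕ) : YoungDiagram :=
  YoungDiagram.ofRowLens [d] (List.pairwise_singleton _ d).sortedGE

/-! The coefficient of `x^α` in `s_μ` is the Kostka number `K_{μ,α}`, which vanishes unless
`|α| = |μ|`; hence `f` is homogeneous of degree `d` with nonnegative coefficients. For the one-row
shape every content `α` with `|α| = d` is realised by the row listing the letters of `α` in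
increasing order, so `K_{(d),α} > 0` and the term `c_{(d)} K_{(d),α}` alone makes the coefficient
of `x^α` positive. The support is then the set of all lattice points of the hyperplane
`∑ α_i = d`, which contains the Newton polytope, so `f` is SNP. -/

lemma mem_oneRow {d : ℕ} {c : ℕ × ℕ} : c ∈ oneRow d ↔ c.1 = 0 ∧ c.2 < d := by
  simp [oneRow, YoungDiagram.mem_ofRowLens]

lemma cells_oneRow (d : ℕ) :
    (oneRow d).cells = (range d).map (Function.Embedding.sectR 0 ℕ) := by
  ext ⟨i, j⟩
  simp [mem_oneRow, eq_comm, and_comm]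

lemma card_oneRow (d : ℕ) : (oneRow d).card = d := by
  simp [YoungDiagram.card, cells_oneRow]

lemma contentCount_oneRow {d : ℕ} (T : SemistandardYoungTableau (oneRow d)) (v : ℕ) :
    contentCount T v = #{j ∈ range d | T 0 j = v} := by
  rw [contentCount, cells_oneRow, filter_map, card_map]
  rfl

lemma List.card_filter_getD_eq_count (L : List ℕ) (v : ℕ) :
    #{j ∈ Finset.range L.length | L.getD j 0 = v} = L.count v := by
  induction L with
  | nil => simp
  | cons a L ih =>
    rw [card_filter, List.length_cons, Finset.sum_range_succ', ← card_filter, List.count_cons]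
    simp only [List.getD_cons_succ, List.getD_cons_zero, ih, beq_iff_eq]

def rowTableau (s : Multiset ℕ) : SemistandardYoungTableau (oneRow (Multiset.card s)) where
  entry i j := if i = 0 then (s.sort (· ≤ ·)).getD j 0 else 0
  row_weak' {i j₁ j₂} hj hcell := by
    obtain ⟨rfl, hj₂⟩ := mem_oneRow.1 hcell
    rw [← Multiset.length_sort (· ≤ ·)] at hj₂
    simp only [if_true, List.getD_eq_getElem _ _ (hj.trans hj₂), List.getD_eq_getElem _ _ hj₂]
    exact List.pairwise_iff_getElem.1 (s.pairwise_sort _) _ _ _ _ hj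
  col_strict' {i₁ i₂ j} hi hcell := by
    have := (mem_oneRow.1 hcell).1
    omega
  zeros' {i j} hcell := by
    rw [mem_oneRow, ← Multiset.length_sort (· ≤ ·)] at hcell
    split_ifs with hi
    · exact List.getD_eq_default _ _ (by omega)
    · rfl

lemma contentCount_rowTableau (s : Multiset ℕ) (v : ℕ) :
    contentCount (rowTableau s) v = s.count v := by
  rw [contentCount_oneRow]
  change #{j ∈ range s.card | (s.sort (· ≤ ·)).getD j 0 = v} = _
  rw [← Multiset.length_sort (· ≤ ·), List.card_filter_getD_eq_count, ← Multiset.coe_count,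
    Multiset.sort_eq]

lemma finite_setOf_contentCount_eq (μ : YoungDiagram) {g : ℕ → ℕ}
    (hg : (Function.support g).Finite) :
    {T : SemistandardYoungTableau μ | ∀ v, contentCount T v = g v}.Finite := by
  let entries (T : SemistandardYoungTableau μ) (c : μ.cells) : ℕ := T c.1.1 c.1.2
  have hinj : entries.Injective := by
    intro T T' h
    ext i j
    by_cases hc : (i, j) ∈ μ
    · exact congrFun h ⟨(i, j), (YoungDiagram.mem_cells _).2 hc⟩
    · rw [T.zeros hc, T'.zeros hc]
  refine ((Set.Finite.pi fun _ => hg).preimage hinj.injOn).subset fun T hT => ?_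
  simp only [Set.mem_preimage, Set.mem_pi, Set.mem_univ, Function.mem_support, true_implies]
  intro c
  rw [← hT, contentCount]
  exact card_ne_zero.2 ⟨c.1, mem_filter.2 ⟨c.2, rfl⟩⟩

-- `kostka` is an `ncard`, which is `0` on infinite sets: positivity needs finiteness.
lemma kostka_pos {μ : YoungDiagram} {g : ℕ → ℕ} (hg : (Function.support g).Finite)
    (T : SemistandardYoungTableau μ) (hT : ∀ v, contentCount T v = g v) : 0 < kostka μ g :=
  (Set.ncard_pos (finite_setOf_contentCount_eq μ hg)).2 ⟨T, hT⟩

lemma kostka_oneRow_count_pos (s : Multiset ℕ) :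
    0 < kostka (oneRow (Multiset.card s)) s.count :=
  kostka_pos (s.toFinset.finite_toSet.subset fun _ hv => Multiset.mem_toFinset.2
    (Multiset.count_ne_zero.1 hv)) (rowTableau s) (contentCount_rowTableau s)

lemma Finsupp.count_map_val_toMultiset {n : ℕ} (β : Fin n →₀ ℕ) (v : ℕ) :
    (β.toMultiset.map Fin.val).count v = if h : v < n then β ⟨v, h⟩ else 0 := by
  split_ifs with h
  · exact (Multiset.count_map_eq_count' _ _ Fin.val_injective ⟨v, h⟩).trans
      (Finsupp.count_toMultiset β _)
  · exact Multiset.count_eq_zero.2 fun hv => by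
      obtain ⟨i, -, rfl⟩ := Multiset.mem_map.1 hv
      exact h i.2

lemma Finsupp.card_map_val_toMultiset {n : ℕ} (β : Fin n →₀ ℕ) :
    Multiset.card (β.toMultiset.map Fin.val) = ∑ i, β i := by
  rw [Multiset.card_map, Finsupp.card_toMultiset, Finsupp.sum_fintype _ _ fun _ => rfl]
  rfl

lemma kostka_oneRow_pos {n d : ℕ} (β : Fin n →₀ ℕ) (hβ : ∑ i, β i = d) :
    0 < kostka (oneRow d) (fun v => if h : v < n then β ⟨v, h⟩ else 0) := by
  have := kostka_oneRow_count_pos (β.toMultiset.map Fin.val)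
  rwa [Finsupp.card_map_val_toMultiset, hβ, funext (Finsupp.count_map_val_toMultiset β)] at this

lemma MvPolynomial.prod_X_pow_eq_monomial' {σ R : Type*} [Fintype σ] [CommSemiring R]
    (α : σ → ℕ) :
    ∏ i, (X i : MvPolynomial σ R) ^ α i = monomial (Finsupp.equivFunOnFinite.symm α) 1 := by
  rw [monomial_eq, C_1, one_mul, Finsupp.prod_pow]
  rfl

lemma coeff_schur (μ : YoungDiagram) (n : ℕ) (β : Fin n →₀ ℕ) :
    (schur μ n).coeff β = if ∑ i, β i = μ.card then
      (kostka μ (fun v => if h : v < n then β ⟨v, h⟩ else 0) : ℝ) else 0 := by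
  simp only [schur, MvPolynomial.coeff_sum, MvPolynomial.coeff_smul,
    MvPolynomial.prod_X_pow_eq_monomial', MvPolynomial.coeff_monomial, Equiv.symm_apply_eq]
  simp [Finset.Nat.mem_antidiagonalTuple]

lemma coeff_schur_nonneg (μ : YoungDiagram) (n : ℕ) (β : Fin n →₀ ℕ) :
    0 ≤ (schur μ n).coeff β := by
  rw [coeff_schur]
  split_ifs <;> positivity

lemma snp_of_mem_support_iff {n d : ℕ} {f : MvPolynomial (Fin n) ℝ}
    (hf : ∀ α : Fin n →₀ ℕ, α ∈ f.support ↔ ∑ i, α i = d) : SNP f := by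
  intro α
  constructor
  · intro hα
    have hyperplane : newtonPolytope f ⊆ {v | ∑ i, v i = (d : ℝ)} := by
      refine convexHull_min ?_ (convex_hyperplane ?_ _)
      · rintro _ ⟨β, hβ, rfl⟩
        show ∑ i, ((β i : ℕ) : ℝ) = d
        exact_mod_cast (hf β).1 hβ
      · exact ⟨fun x y => sum_add_distrib, fun r x => (mul_sum _ _ _).symm⟩
    have hsum : ∑ i, (α i : ℝ) = d := hyperplane hα
    refine ⟨Finsupp.equivFunOnFinite.symm α, (hf _).2 ?_, fun _ => rfl⟩
    simpa using (by exact_mod_cast hsum : ∑ i, α i = d)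
  · rintro ⟨β, hβ, hβα⟩
    exact subset_convexHull ℝ _ ⟨β, hβ, funext fun i => by rw [hβα]⟩

lemma mem_support_sum_smul_schur_iff {n d : ℕ} {S : Finset YoungDiagram}
    (hS : ∀ μ ∈ S, μ.card = d) {c : YoungDiagram → ℝ} (hc : ∀ μ, 0 ≤ c μ)
    (hrow : oneRow d ∈ S) (hcrow : 0 < c (oneRow d)) (β : Fin n →₀ ℕ) :
    β ∈ (∑ μ ∈ S, c μ • schur μ n).support ↔ ∑ i, β i = d := by
  have hcoeff :
      (∑ μ ∈ S, c μ • schur μ n).coeff β = ∑ μ ∈ S, c μ * (schur μ n).coeff β := by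
    simp only [MvPolynomial.coeff_sum, MvPolynomial.coeff_smul, smul_eq_mul]
  rw [MvPolynomial.mem_support_iff, hcoeff]
  constructor
  · contrapose!
    intro hβ
    refine sum_eq_zero fun μ hμ => ?_
    rw [coeff_schur, if_neg (hS μ hμ ▸ hβ), mul_zero]
  · intro hβ
    have hrow_pos : 0 < c (oneRow d) * (schur (oneRow d) n).coeff β := by
      rw [coeff_schur, card_oneRow, if_pos hβ]
      exact mul_pos hcrow (Nat.cast_pos.2 (kostka_oneRow_pos β hβ))
    exact (hrow_pos.trans_le (single_le_sum (fun μ _ => mul_nonneg (hc μ)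
      (coeff_schur_nonneg μ n β)) hrow)).ne'

/-- a homogeneous degree-`d` polynomial `f = ∑_μ c_μ s_μ` in `n` variables
with all `c_μ ≥ 0` and `c_{(d)} > 0` has support equal to the set of all exponent vectors
with coordinate sum `d`; in particular `f` is SNP. -/
theorem stmt14 (n d : ℕ) (S : Finset YoungDiagram) (hS : ∀ μ ∈ S, μ.card = d)
    (c : YoungDiagram → ℝ) (hc : ∀ μ, 0 ≤ c μ)
    (hrow : oneRow d ∈ S) (hcrow : 0 < c (oneRow d)) :
    (∀ α : Fin n →₀ ℕ, α ∈ (∑ μ ∈ S, c μ • schur μ n).support ↔ ∑ i, α i = d) ∧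
      SNP (∑ μ ∈ S, c μ • schur μ n) :=
  have hsupp := mem_support_sum_smul_schur_iff hS hc hrow hcrow
  ⟨hsupp, snp_of_mem_support_iff hsupp⟩
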